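/- Let F : X → Y be a shape isomorphism of topological spaces (an isomorphism in the shape category). If sd F = n, then sd X = sd Y = n. -/

import Mathlib

universe u

noncomputable section

namespace ShapePaper

open CategoryTheory

/-! ### H-maps: morphisms of the homotopy category HTop -/

/-- The setoid of continuous maps up to homotopy. -/
def homotopySetoid (X Y : Type u) [TopologicalSpace X] [TopologicalSpace Y] :
    Setoid C(X, Y) :=
  ⟨ContinuousMap.Homotopic, ContinuousMap.Homotopic.equivalence⟩

/-- An H-map `X → Y` is a homotopy class of continuous maps `X → Y`,
i.e. a morphism of the homotopy category `HTop`. -/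
def HMap (X Y : Type u) [TopologicalSpace X] [TopologicalSpace Y] : Type u :=
  Quotient (homotopySetoid X Y)

variable {X Y Z W : Type u} [TopologicalSpace X] [TopologicalSpace Y]
  [TopologicalSpace Z] [TopologicalSpace W]

/-- The H-map (homotopy class) of a continuous map. -/
def HMap.mk (f : C(X, Y)) : HMap X Y := Quotient.mk (homotopySetoid X Y) f

/-- The identity H-map. -/
protected def HMap.id (X : Type u) [TopologicalSpace X] : HMap X X :=
  HMap.mk (ContinuousMap.id X)

/-- Composition of H-maps. -/
protected def HMap.comp (g : HMap Y Z) (f : HMap X Y) : HMap X Z :=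
  Quotient.liftOn₂ g f (fun g f => HMap.mk (g.comp f))
    (fun _ _ _ _ hg hf => Quotient.sound (ContinuousMap.Homotopic.comp hg hf))

theorem HMap.comp_assoc (h : HMap Z W) (g : HMap Y Z) (f : HMap X Y) :
    HMap.comp (HMap.comp h g) f = HMap.comp h (HMap.comp g f) := by
  induction h using Quotient.inductionOn
  induction g using Quotient.inductionOn
  induction f using Quotient.inductionOn
  rfl

theorem HMap.id_comp (f : HMap X Y) : HMap.comp (HMap.id Y) f = f := by
  induction f using Quotient.inductionOn
  rfl

theorem HMap.comp_id (f : HMap X Y) : HMap.comp f (HMap.id X) = f := by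
  induction f using Quotient.inductionOn
  rfl

/-! ### Polyhedra and the category HPol -/

/-- A realization of the space `P` as (the space of) a simplicial complex. -/
structure PolyhedralRealization (P : Type u) [TopologicalSpace P] where
  /-- the ambient topological real vector space -/
  E : Type u
  [addCommGroup : AddCommGroup E]
  [module : Module ℝ E]
  [topE : TopologicalSpace E]
  /-- the simplicial complex -/
  complex : Geometry.SimplicialComplex ℝ E
  /-- `P` is homeomorphic to the space (carrier) of the complex -/
  homeo : P ≃ₜ complex.space

attribute [instance] PolyhedralRealization.addCommGroup PolyhedralRealization.module
  PolyhedralRealization.topE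

/-- The realization has dimension `≤ n`: every simplex has at most `n + 1` vertices. -/
def PolyhedralRealization.DimLE {P : Type u} [TopologicalSpace P]
    (R : PolyhedralRealization P) (n : ℕ) : Prop :=
  ∀ s ∈ R.complex.faces, s.card ≤ n + 1

/-- `P` is a polyhedron. -/
def IsPolyhedron (P : Type u) [TopologicalSpace P] : Prop :=
  Nonempty (PolyhedralRealization P)

/-- `P` is a polyhedron of dimension `≤ n`. -/
def IsPolyhedronDimLE (P : Type u) [TopologicalSpace P] (n : ℕ) : Prop :=
  ∃ R : PolyhedralRealization P, R.DimLE n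

/-- `X` is an object of `HPol`, i.e. has the homotopy type of a polyhedron. -/
def InHPol (X : Type u) [TopologicalSpace X] : Prop :=
  ∃ (P : Type u) (_ : TopologicalSpace P), IsPolyhedron P ∧
    Nonempty (ContinuousMap.HomotopyEquiv X P)

/-- The H-map `f` factors in `HPol` through some polyhedron of dimension `≤ n`. -/
def HMap.FactorsThruPolyhedronDimLE (f : HMap X Y) (n : ℕ) : Prop :=
  ∃ (P : Type u) (_ : TopologicalSpace P), IsPolyhedronDimLE P n ∧
    ∃ (u : HMap X P) (v : HMap P Y), f = v.comp u

/-- `X` is homotopy dominated by a polyhedron of dimension `≤ n`. -/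
def DominatedByPolyhedronDimLE (X : Type u) [TopologicalSpace X] (n : ℕ) : Prop :=
  ∃ (P : Type u) (_ : TopologicalSpace P), IsPolyhedronDimLE P n ∧
    ∃ (s : HMap X P) (d : HMap P X), d.comp s = HMap.id X

/-! ### Inverse systems in HPol -/

/-- An inverse system in the category `HPol`: a directed index set `Idx`, spaces `obj i`
having the homotopy type of polyhedra, and bonding H-maps. -/
structure InverseSystem : Type (u + 1) where
  /-- the index set -/
  Idx : Type u
  [preorder : Preorder Idx]
  [idxNonempty : Nonempty Idx]
  directed : ∀ a b : Idx, ∃ c, a ≤ c ∧ b ≤ c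
  /-- the terms of the system -/
  obj : Idx → Type u
  [topObj : ∀ i, TopologicalSpace (obj i)]
  inHPol : ∀ i, InHPol (obj i)
  /-- the bonding H-maps -/
  bond : ∀ {i j : Idx}, i ≤ j → HMap (obj j) (obj i)
  bond_refl : ∀ i : Idx, bond (le_refl i) = HMap.id (obj i)
  bond_trans : ∀ {i j k : Idx} (hij : i ≤ j) (hjk : j ≤ k),
    HMap.comp (bond hij) (bond hjk) = bond (hij.trans hjk)

attribute [instance] InverseSystem.preorder InverseSystem.idxNonempty InverseSystem.topObj

/-- A morphism of inverse systems in `HPol`. -/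
structure SysMor (𝓧 𝓨 : InverseSystem.{u}) : Type u where
  /-- the index function `φ` -/
  idxMap : 𝓨.Idx → 𝓧.Idx
  /-- the H-maps `f_μ : X_{φ(μ)} → Y_μ` -/
  hmap : ∀ μ : 𝓨.Idx, HMap (𝓧.obj (idxMap μ)) (𝓨.obj μ)
  coherent : ∀ {μ μ' : 𝓨.Idx} (h : μ ≤ μ'),
    ∃ (l : 𝓧.Idx) (h₁ : idxMap μ ≤ l) (h₂ : idxMap μ' ≤ l),
      (𝓨.bond h).comp ((hmap μ').comp (𝓧.bond h₂)) = (hmap μ).comp (𝓧.bond h₁)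

variable {𝓧 𝓨 𝓩 : InverseSystem.{u}}

/-- `f_{μλ} := f_μ ∘ p_{φ(μ)λ}` for `λ ≥ φ(μ)`. -/
def SysMor.shift (F : SysMor 𝓧 𝓨) (μ : 𝓨.Idx) {l : 𝓧.Idx} (h : F.idxMap μ ≤ l) :
    HMap (𝓧.obj l) (𝓨.obj μ) :=
  (F.hmap μ).comp (𝓧.bond h)

theorem SysMor.shift_comp (F : SysMor 𝓧 𝓨) (μ : 𝓨.Idx) {l l' : 𝓧.Idx}
    (h : F.idxMap μ ≤ l) (h' : l ≤ l') :
    (F.shift μ h).comp (𝓧.bond h') = F.shift μ (h.trans h') := by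
  rw [SysMor.shift, SysMor.shift, HMap.comp_assoc, 𝓧.bond_trans]

/-- Coherence, pushed up to all larger indices. -/
theorem SysMor.coherent' (F : SysMor 𝓧 𝓨) {μ μ' : 𝓨.Idx} (h : μ ≤ μ') :
    ∃ (l : 𝓧.Idx) (h₁ : F.idxMap μ ≤ l) (h₂ : F.idxMap μ' ≤ l),
      ∀ {l' : 𝓧.Idx} (hl : l ≤ l'),
        (𝓨.bond h).comp ((F.hmap μ').comp (𝓧.bond (h₂.trans hl))) =
          (F.hmap μ).comp (𝓧.bond (h₁.trans hl)) := by
  obtain ⟨l, h₁, h₂, heq⟩ := F.coherent h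
  refine ⟨l, h₁, h₂, ?_⟩
  intro l' hl
  have := congrArg (fun t => HMap.comp t (𝓧.bond hl)) heq
  simpa only [HMap.comp_assoc, InverseSystem.bond_trans] using this

/-- The dimension of a morphism of inverse systems is `≤ n`. -/
def SysMor.DimLE (F : SysMor 𝓧 𝓨) (n : ℕ) : Prop :=
  ∀ μ : 𝓨.Idx, ∃ (l : 𝓧.Idx) (h : F.idxMap μ ≤ l),
    (F.shift μ h).FactorsThruPolyhedronDimLE n

/-- The dimension of an inverse system is `≤ n` : every term is homotopy dominated by
a polyhedron of dimension `≤ n`. -/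
def InverseSystem.DimLE (𝓧 : InverseSystem.{u}) (n : ℕ) : Prop :=
  ∀ i : 𝓧.Idx, DominatedByPolyhedronDimLE (𝓧.obj i) n

/-- Equivalence of morphisms of inverse systems. -/
def SysMor.Equiv (F G : SysMor 𝓧 𝓨) : Prop :=
  ∀ μ : 𝓨.Idx, ∃ (l : 𝓧.Idx) (h₁ : F.idxMap μ ≤ l) (h₂ : G.idxMap μ ≤ l),
    F.shift μ h₁ = G.shift μ h₂

/-- A pro-morphism (morphism of pro-HPol) is an equivalence class of morphisms
of inverse systems. -/
def ProMor (𝓧 𝓨 : InverseSystem.{u}) : Type u :=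
  Quot (@SysMor.Equiv 𝓧 𝓨)

/-- The pro-morphism represented by a morphism of inverse systems. -/
def ProMor.mk (F : SysMor 𝓧 𝓨) : ProMor 𝓧 𝓨 := Quot.mk _ F

/-- The dimension of a pro-morphism is `≤ n` if it admits a representative of
dimension `≤ n`. -/
def ProMor.DimLE (f : ProMor 𝓧 𝓨) (n : ℕ) : Prop :=
  ∃ F : SysMor 𝓧 𝓨, ProMor.mk F = f ∧ F.DimLE n

/-- The identity morphism of an inverse system. -/
def SysMor.identity (𝓧 : InverseSystem.{u}) : SysMor 𝓧 𝓧 where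
  idxMap := id
  hmap i := HMap.id (𝓧.obj i)
  coherent := by
    intro μ μ' h
    refine ⟨μ', h, le_refl _, ?_⟩
    show (𝓧.bond h).comp ((HMap.id _).comp (𝓧.bond (le_refl μ'))) =
      (HMap.id _).comp (𝓧.bond h)
    rw [HMap.id_comp, HMap.id_comp, 𝓧.bond_trans]

/-- Composition of morphisms of inverse systems. -/
def SysMor.comp (G : SysMor 𝓨 𝓩) (F : SysMor 𝓧 𝓨) : SysMor 𝓧 𝓩 where
  idxMap := F.idxMap ∘ G.idxMap
  hmap ν := (G.hmap ν).comp (F.hmap (G.idxMap ν))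
  coherent := by
    intro ν ν' h
    obtain ⟨μ, hμ₁, hμ₂, hg⟩ := G.coherent h
    obtain ⟨l₁, h₁₁, h₁₂, hf₁⟩ := F.coherent' hμ₁
    obtain ⟨l₂, h₂₁, h₂₂, hf₂⟩ := F.coherent' hμ₂
    obtain ⟨l, hl₁, hl₂⟩ := 𝓧.directed l₁ l₂
    refine ⟨l, h₁₁.trans hl₁, h₂₁.trans hl₂, ?_⟩
    have e₁ := hf₁ hl₁
    have e₂ := hf₂ hl₂
    have hg₂ := congrArg
      (fun t => HMap.comp t ((F.hmap μ).comp (𝓧.bond (h₂₂.trans hl₂)))) hg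
    simp only [HMap.comp_assoc] at hg₂ e₁ e₂ ⊢
    rw [← e₂, hg₂, ← e₁]

/-- Composition of pro-morphisms (via choice of representatives). -/
def ProMor.comp (g : ProMor 𝓨 𝓩) (f : ProMor 𝓧 𝓨) : ProMor 𝓧 𝓩 :=
  ProMor.mk ((Quot.out g).comp (Quot.out f))

/-- The identity pro-morphism. -/
protected def ProMor.id (𝓧 : InverseSystem.{u}) : ProMor 𝓧 𝓧 :=
  ProMor.mk (SysMor.identity 𝓧)

/-- `α` is an isomorphism of pro-HPol. -/
def ProMor.IsIso (α : ProMor 𝓧 𝓨) : Prop :=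
  ∃ β : ProMor 𝓨 𝓧, β.comp α = ProMor.id 𝓧 ∧ α.comp β = ProMor.id 𝓨

/-! ### Restriction to a cofinal subset -/

/-- The subsystem of `𝓨` determined by a cofinal subset `S` of the index set. -/
def InverseSystem.restrict (𝓨 : InverseSystem.{u}) (S : Set 𝓨.Idx)
    (hcof : ∀ μ : 𝓨.Idx, ∃ μ' ∈ S, μ ≤ μ') : InverseSystem.{u} where
  Idx := ↥S
  idxNonempty := by
    obtain ⟨μ⟩ := 𝓨.idxNonempty
    obtain ⟨μ', hs, -⟩ := hcof μ
    exact ⟨⟨μ', hs⟩⟩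
  directed a b := by
    obtain ⟨c, hac, hbc⟩ := 𝓨.directed a b
    obtain ⟨c', hs, hcc'⟩ := hcof c
    exact ⟨⟨c', hs⟩, Subtype.coe_le_coe.mp (le_trans hac hcc'),
      Subtype.coe_le_coe.mp (le_trans hbc hcc')⟩
  obj i := 𝓨.obj i
  topObj i := 𝓨.topObj i
  inHPol i := 𝓨.inHPol i
  bond h := 𝓨.bond h
  bond_refl i := 𝓨.bond_refl i
  bond_trans h₁ h₂ := 𝓨.bond_trans h₁ h₂

/-- The morphism induced by `F : 𝓧 → 𝓨` and the inclusion of a cofinal subset of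
the index set of `𝓨`. -/
def SysMor.restrict (F : SysMor 𝓧 𝓨) (S : Set 𝓨.Idx)
    (hcof : ∀ μ : 𝓨.Idx, ∃ μ' ∈ S, μ ≤ μ') : SysMor 𝓧 (𝓨.restrict S hcof) where
  idxMap μ := F.idxMap μ.val
  hmap μ := F.hmap μ.val
  coherent := by
    intro μ μ' h
    exact F.coherent h

/-! ### Expansions and shape dimension -/

/-- An `HPol`-expansion of the topological space `X`. -/
structure Expansion (X : Type u) [TopologicalSpace X] (𝓧 : InverseSystem.{u}) where
  /-- the projection H-maps `p_λ : X → X_λ` -/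
  proj : ∀ l : 𝓧.Idx, HMap X (𝓧.obj l)
  proj_bond : ∀ {l l' : 𝓧.Idx} (h : l ≤ l'), (𝓧.bond h).comp (proj l') = proj l
  /-- every H-map into a space of `HPol` factors through some term of the system -/
  factors : ∀ (P : Type u) [TopologicalSpace P], InHPol P → ∀ f : HMap X P,
    ∃ (l : 𝓧.Idx) (g : HMap (𝓧.obj l) P), g.comp (proj l) = f
  /-- the factorization is unique after passing to a larger index -/
  factors_unique : ∀ (P : Type u) [TopologicalSpace P], InHPol P →
    ∀ (l : 𝓧.Idx) (g g' : HMap (𝓧.obj l) P), g.comp (proj l) = g'.comp (proj l) →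
      ∃ (l' : 𝓧.Idx) (h : l ≤ l'), g.comp (𝓧.bond h) = g'.comp (𝓧.bond h)

/-- The shape dimension of a topological space is `≤ n`: `X` admits an
`HPol`-expansion all of whose terms are homotopy dominated by polyhedra of
dimension `≤ n`. -/
def ShapeDimLE (X : Type u) [TopologicalSpace X] (n : ℕ) : Prop :=
  ∃ (𝓧 : InverseSystem.{u}) (_ : Expansion X 𝓧), 𝓧.DimLE n

/-- The morphism of inverse systems `F` represents the H-map `f` with respect to the
expansions `pX` and `pY`, i.e. `q_μ ∘ f = f_μ ∘ p_{φ(μ)}` for all `μ`. -/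
def Represents {X Y : Type u} [TopologicalSpace X] [TopologicalSpace Y]
    {𝓧 𝓨 : InverseSystem.{u}} (pX : Expansion X 𝓧) (pY : Expansion Y 𝓨)
    (f : HMap X Y) (F : SysMor 𝓧 𝓨) : Prop :=
  ∀ μ : 𝓨.Idx, (F.hmap μ).comp (pX.proj (F.idxMap μ)) = (pY.proj μ).comp f

/-- The shape dimension of an H-map `f : X → Y` is `≤ n`: the shape morphism
induced by `f` admits a representation by a pro-morphism of dimension `≤ n`. -/
def HMapShapeDimLE {X Y : Type u} [TopologicalSpace X] [TopologicalSpace Y]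
    (f : HMap X Y) (n : ℕ) : Prop :=
  ∃ (𝓧 𝓨 : InverseSystem.{u}) (pX : Expansion X 𝓧) (pY : Expansion Y 𝓨)
    (F : SysMor 𝓧 𝓨), Represents pX pY f F ∧ (ProMor.mk F).DimLE n

/-- The shape dimension of a space, as an extended natural number. -/
def shapeDim (X : Type u) [TopologicalSpace X] : ℕ∞ :=
  sInf {n : ℕ∞ | ∃ m : ℕ, n = (m : ℕ∞) ∧ ShapeDimLE X m}

/-- The shape dimension of an H-map, as an extended natural number. -/
def hmapShapeDim {X Y : Type u} [TopologicalSpace X] [TopologicalSpace Y]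
    (f : HMap X Y) : ℕ∞ :=
  sInf {n : ℕ∞ | ∃ m : ℕ, n = (m : ℕ∞) ∧ HMapShapeDimLE f m}

end ShapePaper

/-!
For an `HPol`-expansion `𝓧` of `X`, `sd X ≤ m` holds exactly when the identity morphism of `𝓧`
has dimension `≤ m`, i.e. when every bond `X_λ' → X_λ` with `λ'` large enough factors through
a polyhedron of dimension `≤ m`. One direction factors the identity through the polyhedra
dominating the terms of another expansion; for the other, if `X_{ν(λ)} → X_λ` factors as
`X_{ν(λ)} → P_λ → X_λ`, the polyhedra `P_λ` with bonds `P_λ' → X_λ' → X_{ν(λ)} → P_λ` form a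
new expansion of `X`.

Dimension `≤ m` of morphisms of inverse systems is stable under equivalence and under
composition with arbitrary morphisms on either side. Since `G ∘ F` and `F ∘ G` are equivalent
to the identities, both identities have dimension `≤ dim F`, which bounds `sd X` and `sd Y`.
Conversely, `sd X ≤ m` gives every morphism out of `𝓧` dimension `≤ m`; applied to `F`, and
to `id_𝓨` together with `F ~ id_𝓨 ∘ F`, this bounds `dim F` by `sd X` and by `sd Y`.
-/

namespace ShapePaper

variable {X Y Z W : Type u} [TopologicalSpace X] [TopologicalSpace Y]
  [TopologicalSpace Z] [TopologicalSpace W] {m n : ℕ}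

theorem IsPolyhedronDimLE.inHPol {P : Type u} [TopologicalSpace P]
    (h : IsPolyhedronDimLE P n) : InHPol P := by
  obtain ⟨R, -⟩ := h
  exact ⟨P, ‹_›, ⟨R⟩, ⟨ContinuousMap.HomotopyEquiv.refl P⟩⟩

namespace HMap.FactorsThruPolyhedronDimLE

theorem comp_right {f : HMap Y Z} (hf : f.FactorsThruPolyhedronDimLE n) (g : HMap X Y) :
    (f.comp g).FactorsThruPolyhedronDimLE n := by
  obtain ⟨P, _, hP, u, v, rfl⟩ := hf
  exact ⟨P, _, hP, u.comp g, v, HMap.comp_assoc _ _ _⟩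

theorem comp_left (h : HMap Z W) {f : HMap Y Z} (hf : f.FactorsThruPolyhedronDimLE n) :
    (h.comp f).FactorsThruPolyhedronDimLE n := by
  obtain ⟨P, _, hP, u, v, rfl⟩ := hf
  exact ⟨P, _, hP, u, h.comp v, (HMap.comp_assoc _ _ _).symm⟩

end HMap.FactorsThruPolyhedronDimLE

variable {𝓧 𝓨 𝓩 : InverseSystem.{u}}

namespace SysMor

theorem Equiv.refl (F : SysMor 𝓧 𝓨) : F.Equiv F :=
  fun μ => ⟨F.idxMap μ, le_rfl, le_rfl, rfl⟩

theorem Equiv.symm {F G : SysMor 𝓧 𝓨} (h : F.Equiv G) : G.Equiv F := by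
  intro μ
  obtain ⟨l, h₁, h₂, he⟩ := h μ
  exact ⟨l, h₂, h₁, he.symm⟩

theorem Equiv.trans {F G H : SysMor 𝓧 𝓨} (h : F.Equiv G) (h' : G.Equiv H) : F.Equiv H := by
  intro μ
  obtain ⟨l, h₁, h₂, he⟩ := h μ
  obtain ⟨l', h₁', h₂', he'⟩ := h' μ
  obtain ⟨k, hk, hk'⟩ := 𝓧.directed l l'
  refine ⟨k, h₁.trans hk, h₂'.trans hk', ?_⟩
  rw [← F.shift_comp μ h₁ hk, he, G.shift_comp μ h₂ hk, ← G.shift_comp μ h₁' hk', he',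
    H.shift_comp]

theorem equivalence_equiv : Equivalence (@SysMor.Equiv 𝓧 𝓨) :=
  ⟨Equiv.refl, Equiv.symm, Equiv.trans⟩

theorem identity_shift (l : 𝓧.Idx) {l' : 𝓧.Idx} (h : l ≤ l') :
    (SysMor.identity 𝓧).shift l h = 𝓧.bond h :=
  HMap.id_comp _

theorem comp_shift (A : SysMor 𝓨 𝓩) (B : SysMor 𝓧 𝓨) (ν : 𝓩.Idx)
    {l : 𝓧.Idx} (h : B.idxMap (A.idxMap ν) ≤ l) :
    (A.comp B).shift ν h = (A.hmap ν).comp (B.shift (A.idxMap ν) h) :=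
  HMap.comp_assoc _ _ _

theorem Equiv.comp_left (A : SysMor 𝓨 𝓩) {B₁ B₂ : SysMor 𝓧 𝓨} (h : B₁.Equiv B₂) :
    (A.comp B₁).Equiv (A.comp B₂) := by
  intro ν
  obtain ⟨l, h₁, h₂, he⟩ := h (A.idxMap ν)
  exact ⟨l, h₁, h₂, by rw [comp_shift, comp_shift, he]⟩

theorem Equiv.comp_right {A₁ A₂ : SysMor 𝓨 𝓩} (h : A₁.Equiv A₂) (B : SysMor 𝓧 𝓨) :
    (A₁.comp B).Equiv (A₂.comp B) := by
  intro ν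
  obtain ⟨m, hm₁, hm₂, he⟩ := h ν
  obtain ⟨l₁, a₁, b₁, hc₁⟩ := B.coherent' hm₁
  obtain ⟨l₂, a₂, b₂, hc₂⟩ := B.coherent' hm₂
  obtain ⟨l, hl₁, hl₂⟩ := 𝓧.directed l₁ l₂
  refine ⟨l, a₁.trans hl₁, a₂.trans hl₂, ?_⟩
  rw [comp_shift, comp_shift, shift, shift, ← hc₁ hl₁, ← hc₂ hl₂, ← HMap.comp_assoc (A₁.hmap ν),
    ← HMap.comp_assoc (A₂.hmap ν)]
  exact congrArg (fun t => HMap.comp t ((B.hmap m).comp (𝓧.bond (b₁.trans hl₁)))) he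

theorem identity_comp_equiv (F : SysMor 𝓧 𝓨) : ((SysMor.identity 𝓨).comp F).Equiv F :=
  fun μ =>
    ⟨F.idxMap μ, le_rfl, le_rfl, (comp_shift _ F μ _).trans (HMap.id_comp _)⟩

theorem DimLE.of_equiv {F₁ F₂ : SysMor 𝓧 𝓨} (hd : F₁.DimLE m) (h : F₁.Equiv F₂) :
    F₂.DimLE m := by
  intro μ
  obtain ⟨l, h₁, h₂, he⟩ := h μ
  obtain ⟨l₀, h₀, hf⟩ := hd μ
  obtain ⟨l', hl, hl₀⟩ := 𝓧.directed l l₀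
  refine ⟨l', h₂.trans hl, ?_⟩
  rw [← F₂.shift_comp μ h₂ hl, ← he, F₁.shift_comp μ h₁ hl]
  simpa only [F₁.shift_comp] using hf.comp_right (𝓧.bond hl₀)

theorem DimLE.comp_left (A : SysMor 𝓨 𝓩) {B : SysMor 𝓧 𝓨} (hB : B.DimLE m) :
    (A.comp B).DimLE m := by
  intro ν
  obtain ⟨l, h, hf⟩ := hB (A.idxMap ν)
  exact ⟨l, h, by rw [comp_shift]; exact hf.comp_left _⟩

theorem DimLE.comp_right {A : SysMor 𝓨 𝓩} (hA : A.DimLE m) (B : SysMor 𝓧 𝓨) :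
    (A.comp B).DimLE m := by
  intro ν
  obtain ⟨μ, h, hf⟩ := hA ν
  obtain ⟨l, h₁, h₂, hc⟩ := B.coherent h
  refine ⟨l, h₁, ?_⟩
  rw [comp_shift, shift, ← hc, ← HMap.comp_assoc]
  exact hf.comp_right _

end SysMor

theorem ProMor.mk_eq_mk_iff {F G : SysMor 𝓧 𝓨} : ProMor.mk F = ProMor.mk G ↔ F.Equiv G :=
  Quot.eq.trans SysMor.equivalence_equiv.eqvGen_iff

theorem ProMor.mk_comp_mk (A : SysMor 𝓨 𝓩) (B : SysMor 𝓧 𝓨) :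
    (ProMor.mk A).comp (ProMor.mk B) = ProMor.mk (A.comp B) := by
  have hA : (Quot.out (ProMor.mk A)).Equiv A := ProMor.mk_eq_mk_iff.mp (Quot.out_eq _)
  have hB : (Quot.out (ProMor.mk B)).Equiv B := ProMor.mk_eq_mk_iff.mp (Quot.out_eq _)
  exact ProMor.mk_eq_mk_iff.mpr ((hA.comp_right _).trans (hB.comp_left _))

theorem SysMor.comp_equiv_identity {F : SysMor 𝓧 𝓨} {G : SysMor 𝓨 𝓧}
    (h : (ProMor.mk G).comp (ProMor.mk F) = ProMor.id 𝓧) :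
    (G.comp F).Equiv (SysMor.identity 𝓧) :=
  ProMor.mk_eq_mk_iff.mp ((ProMor.mk_comp_mk G F).symm.trans h)

theorem ProMor.dimLE_mk_iff {F : SysMor 𝓧 𝓨} :
    (ProMor.mk F).DimLE m ↔ F.DimLE m :=
  ⟨fun ⟨_, h, hd⟩ => hd.of_equiv (ProMor.mk_eq_mk_iff.mp h), fun h => ⟨F, rfl, h⟩⟩

namespace Expansion

variable (pX : Expansion X 𝓧)

theorem exists_bond_eq_of_comp_proj_eq {P : Type u} [TopologicalSpace P] (hP : InHPol P)
    {l l' : 𝓧.Idx} (g : HMap (𝓧.obj l) P) (g' : HMap (𝓧.obj l') P)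
    (h : g.comp (pX.proj l) = g'.comp (pX.proj l')) :
    ∃ (k : 𝓧.Idx) (hk : l ≤ k) (hk' : l' ≤ k), g.comp (𝓧.bond hk) = g'.comp (𝓧.bond hk') := by
  obtain ⟨k, hk, hk'⟩ := 𝓧.directed l l'
  have hproj : (g.comp (𝓧.bond hk)).comp (pX.proj k) =
      (g'.comp (𝓧.bond hk')).comp (pX.proj k) := by
    rw [HMap.comp_assoc, pX.proj_bond, h, HMap.comp_assoc, pX.proj_bond]
  obtain ⟨k', hkk', he⟩ := pX.factors_unique P hP k _ _ hproj
  refine ⟨k', hk.trans hkk', hk'.trans hkk', ?_⟩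
  simpa only [HMap.comp_assoc, 𝓧.bond_trans] using he

theorem exists_factorsThruPolyhedronDimLE (hX : ShapeDimLE X m) {P : Type u}
    [TopologicalSpace P] (hP : InHPol P) (f : HMap X P) :
    ∃ (l : 𝓧.Idx) (g : HMap (𝓧.obj l) P),
      g.comp (pX.proj l) = f ∧ g.FactorsThruPolyhedronDimLE m := by
  obtain ⟨𝓧', pX', hdom⟩ := hX
  obtain ⟨l', g', rfl⟩ := pX'.factors P hP f
  obtain ⟨Q, _, hQ, s, d, hds⟩ := hdom l'
  obtain ⟨l, w, hw⟩ := pX.factors Q hQ.inHPol (s.comp (pX'.proj l'))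
  refine ⟨l, (g'.comp d).comp w, ?_, Q, _, hQ, w, g'.comp d, rfl⟩
  rw [HMap.comp_assoc, hw, HMap.comp_assoc, ← HMap.comp_assoc d, hds, HMap.id_comp]

end Expansion

theorem SysMor.dimLE_of_shapeDimLE (pX : Expansion X 𝓧) (hX : ShapeDimLE X m)
    (F : SysMor 𝓧 𝓨) : F.DimLE m := by
  intro μ
  obtain ⟨l, g, hg, hgm⟩ := pX.exists_factorsThruPolyhedronDimLE hX (𝓨.inHPol μ)
    ((F.hmap μ).comp (pX.proj (F.idxMap μ)))
  obtain ⟨k, hk, hk', he⟩ := pX.exists_bond_eq_of_comp_proj_eq (𝓨.inHPol μ) _ g hg.symm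
  exact ⟨k, hk, (show F.shift μ hk = _ from he) ▸ hgm.comp_right _⟩

structure BondFactorization (𝓧 : InverseSystem.{u}) (n : ℕ) where
  next : 𝓧.Idx → 𝓧.Idx
  le_next : ∀ l, l ≤ next l
  P : 𝓧.Idx → Type u
  [topP : ∀ l, TopologicalSpace (P l)]
  isPolyhedronDimLE : ∀ l, IsPolyhedronDimLE (P l) n
  u : ∀ l, HMap (𝓧.obj (next l)) (P l)
  v : ∀ l, HMap (P l) (𝓧.obj l)
  bond_eq : ∀ l, 𝓧.bond (le_next l) = (v l).comp (u l)

attribute [instance] BondFactorization.topP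

namespace BondFactorization

variable (D : BondFactorization 𝓧 n)

/-- The counter in the second coordinate makes `a ≤ a` hold only through `a = a`, so that
identity bonds need not be factored. -/
def IdxLE (a b : 𝓧.Idx × ULift.{u} ℕ) : Prop :=
  a = b ∨ (D.next a.1 ≤ b.1 ∧ a.2.down < b.2.down)

theorem IdxLE.trans {a b c : 𝓧.Idx × ULift.{u} ℕ} (hab : D.IdxLE a b) (hbc : D.IdxLE b c) :
    D.IdxLE a c := by
  rcases hab with rfl | ⟨h₁, h₂⟩
  · exact hbc
  rcases hbc with rfl | ⟨h₁', h₂'⟩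
  · exact Or.inr ⟨h₁, h₂⟩
  · exact Or.inr ⟨h₁.trans ((D.le_next b.1).trans h₁'), h₂.trans h₂'⟩

def castHMap : ∀ {a b : 𝓧.Idx × ULift.{u} ℕ}, a = b → HMap (D.P b.1) (D.P a.1)
  | _, _, rfl => HMap.id _

open Classical in
def bond {a b : 𝓧.Idx × ULift.{u} ℕ} (h : D.IdxLE a b) : HMap (D.P b.1) (D.P a.1) :=
  if hd : D.next a.1 ≤ b.1 ∧ a.2.down < b.2.down then
    ((D.u a.1).comp (𝓧.bond hd.1)).comp (D.v b.1)
  else D.castHMap (h.resolve_right hd)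

theorem bond_of_lt {a b : 𝓧.Idx × ULift.{u} ℕ} (h : D.IdxLE a b)
    (hd : D.next a.1 ≤ b.1 ∧ a.2.down < b.2.down) :
    D.bond h = ((D.u a.1).comp (𝓧.bond hd.1)).comp (D.v b.1) :=
  dif_pos hd

theorem bond_self {a : 𝓧.Idx × ULift.{u} ℕ} (h : D.IdxLE a a) :
    D.bond h = HMap.id (D.P a.1) := by
  rw [bond, dif_neg fun hd => lt_irrefl _ hd.2]
  rfl

theorem bond_comp_bond {a b c : 𝓧.Idx × ULift.{u} ℕ} (hab : D.IdxLE a b) (hbc : D.IdxLE b c) :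
    (D.bond hab).comp (D.bond hbc) = D.bond (hab.trans D hbc) := by
  by_cases hd₁ : D.next a.1 ≤ b.1 ∧ a.2.down < b.2.down
  · by_cases hd₂ : D.next b.1 ≤ c.1 ∧ b.2.down < c.2.down
    · have hd₃ : D.next a.1 ≤ c.1 ∧ a.2.down < c.2.down :=
        ⟨hd₁.1.trans ((D.le_next b.1).trans hd₂.1), hd₁.2.trans hd₂.2⟩
      rw [D.bond_of_lt hab hd₁, D.bond_of_lt hbc hd₂, D.bond_of_lt _ hd₃]
      simp only [HMap.comp_assoc]
      rw [← HMap.comp_assoc (D.v b.1) (D.u b.1), ← D.bond_eq,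
        ← HMap.comp_assoc (𝓧.bond (D.le_next b.1)), 𝓧.bond_trans,
        ← HMap.comp_assoc (𝓧.bond hd₁.1), 𝓧.bond_trans]
    · obtain rfl : b = c := hbc.resolve_right hd₂
      rw [D.bond_self hbc, HMap.comp_id]
  · obtain rfl : a = b := hab.resolve_right hd₁
    rw [D.bond_self hab, HMap.id_comp]

def system : InverseSystem.{u} where
  Idx := 𝓧.Idx × ULift.{u} ℕ
  preorder :=
    { le := D.IdxLE
      le_refl _ := Or.inl rfl
      le_trans _ _ _ := IdxLE.trans D
      lt a b := D.IdxLE a b ∧ ¬D.IdxLE b a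
      lt_iff_le_not_ge _ _ := Iff.rfl }
  idxNonempty := ⟨(Classical.arbitrary 𝓧.Idx, ⟨0⟩)⟩
  directed a b := by
    obtain ⟨c, h₁, h₂⟩ := 𝓧.directed (D.next a.1) (D.next b.1)
    exact ⟨(c, ⟨max a.2.down b.2.down + 1⟩),
      Or.inr ⟨h₁, Nat.lt_succ_of_le (le_max_left _ _)⟩,
      Or.inr ⟨h₂, Nat.lt_succ_of_le (le_max_right _ _)⟩⟩
  obj a := D.P a.1
  inHPol a := (D.isPolyhedronDimLE a.1).inHPol
  bond h := D.bond h
  bond_refl _ := D.bond_self _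
  bond_trans h₁ h₂ := D.bond_comp_bond h₁ h₂

theorem system_dimLE : D.system.DimLE n := fun a =>
  ⟨D.P a.1, _, D.isPolyhedronDimLE a.1, HMap.id _, HMap.id _, HMap.id_comp _⟩

def expansion (pX : Expansion X 𝓧) : Expansion X D.system where
  proj a := (D.u a.1).comp (pX.proj (D.next a.1))
  proj_bond {a b} h := by
    by_cases hd : D.next a.1 ≤ b.1 ∧ a.2.down < b.2.down
    · change (D.bond h).comp _ = _
      rw [D.bond_of_lt h hd]
      simp only [HMap.comp_assoc]
      rw [← HMap.comp_assoc (D.v b.1), ← D.bond_eq, pX.proj_bond, pX.proj_bond]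
    · obtain rfl : a = b := (show D.IdxLE a b from h).resolve_right hd
      change (D.bond h).comp _ = _
      rw [D.bond_self h, HMap.id_comp]
  factors Q _ hQ f := by
    obtain ⟨l, g, rfl⟩ := pX.factors Q hQ f
    refine ⟨(l, ⟨0⟩), (g.comp (D.v l) : HMap (D.P l) Q), ?_⟩
    change (g.comp (D.v l)).comp ((D.u l).comp (pX.proj (D.next l))) = _
    rw [HMap.comp_assoc, ← HMap.comp_assoc (D.v l), ← D.bond_eq, pX.proj_bond]
  factors_unique Q _ hQ a g g' hgg := by
    obtain ⟨l, hl, he⟩ := pX.factors_unique Q hQ (D.next a.1) (g.comp (D.u a.1))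
      (g'.comp (D.u a.1)) ((HMap.comp_assoc _ _ _).trans (hgg.trans (HMap.comp_assoc _ _ _).symm))
    have hab : D.IdxLE a (l, ⟨a.2.down + 1⟩) := Or.inr ⟨hl, Nat.lt_succ_self _⟩
    refine ⟨(l, ⟨a.2.down + 1⟩), hab, ?_⟩
    change g.comp (D.bond hab) = g'.comp (D.bond hab)
    rw [D.bond_of_lt hab ⟨hl, Nat.lt_succ_self _⟩]
    have reassoc : ∀ k : HMap (D.P a.1) Q,
        k.comp (((D.u a.1).comp (𝓧.bond hl)).comp (D.v l)) =
          ((k.comp (D.u a.1)).comp (𝓧.bond hl)).comp (D.v l) := fun k => by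
      simp only [HMap.comp_assoc]
    exact (reassoc g).trans ((congrArg (fun t => t.comp (D.v l)) he).trans (reassoc g').symm)

end BondFactorization

theorem shapeDimLE_of_identity_dimLE (pX : Expansion X 𝓧)
    (h : (SysMor.identity 𝓧).DimLE n) : ShapeDimLE X n := by
  choose next le_next hfac using h
  choose P _ hP u v huv using hfac
  let D : BondFactorization 𝓧 n :=
    ⟨next, le_next, P, hP, u, v, fun l => (SysMor.identity_shift l _).symm.trans (huv l)⟩
  exact ⟨D.system, D.expansion pX, D.system_dimLE⟩

/-- **Theorem 2.20.** Let `F : X → Y` be a shape isomorphism of topological spaces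
(given, with respect to HPol-expansions of `X` and `Y`, by a morphism of inverse
systems `F`, with two-sided inverse `G`).  If `sd F = n` then `sd X = sd Y = n`. -/
theorem shapeDim_eq_of_iso (X Y : Type u) [TopologicalSpace X] [TopologicalSpace Y]
    (𝓧 𝓨 : InverseSystem.{u}) (pX : Expansion X 𝓧) (pY : Expansion Y 𝓨)
    (F : SysMor 𝓧 𝓨) (G : SysMor 𝓨 𝓧)
    (hinv₁ : (ProMor.mk G).comp (ProMor.mk F) = ProMor.id 𝓧)
    (hinv₂ : (ProMor.mk F).comp (ProMor.mk G) = ProMor.id 𝓨)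
    (n : ℕ) (hF : IsLeast {m : ℕ | (ProMor.mk F).DimLE m} n) :
    IsLeast {m : ℕ | ShapeDimLE X m} n ∧ IsLeast {m : ℕ | ShapeDimLE Y m} n := by
  have hFn : F.DimLE n := ProMor.dimLE_mk_iff.mp hF.1
  have hGF := SysMor.comp_equiv_identity hinv₁
  have hFG := SysMor.comp_equiv_identity hinv₂
  refine ⟨⟨?_, fun m hX => ?_⟩, ⟨?_, fun m hY => ?_⟩⟩
  · exact shapeDimLE_of_identity_dimLE pX ((hFn.comp_left G).of_equiv hGF)
  · exact hF.2 (ProMor.dimLE_mk_iff.mpr (SysMor.dimLE_of_shapeDimLE pX hX F))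
  · exact shapeDimLE_of_identity_dimLE pY ((hFn.comp_right G).of_equiv hFG)
  · have hid : (SysMor.identity 𝓨).DimLE m := SysMor.dimLE_of_shapeDimLE pY hY _
    exact hF.2 (ProMor.dimLE_mk_iff.mpr ((hid.comp_right F).of_equiv F.identity_comp_equiv))

end ShapePaper
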